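/- For every ε > 0 there exists η > 0 such that: whenever q̂ ∈ Q_k, w₀, w₁ ∈ ℝ³ satisfy ‖w₀ − q̂‖ ≤ η and ‖w₁ − q̂‖ ≤ η, and u₀, u₁ ∈ S² satisfy ⟨u₀, w₀⟩ = 0 and ⟨u₁, w₁⟩ = 0, there exist t* ∈ (0, 3 + 4π] and a twice continuously differentiable map u : [0, t*] → ℝ³ with ‖u(t)‖ = 1 for all t, u(0) = u₀, u(t*) = u₁, and, setting w := u × u', w(0) = w₀, w(t*) = w₁ and ∫₀^{t*} [(‖w(t)‖² − 1)² + G(w(t))/2 + ‖w'(t)‖²] dt ≤ ε. -/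

import Mathlib

open MeasureTheory Filter
open scoped RealInnerProductSpace

/-- The cross product on Euclidean `ℝ³`. -/
noncomputable def cross3 (a b : EuclideanSpace ℝ (Fin 3)) : EuclideanSpace ℝ (Fin 3) :=
  (WithLp.equiv 2 (Fin 3 → ℝ)).symm
    (crossProduct ((WithLp.equiv 2 (Fin 3 → ℝ)) a) ((WithLp.equiv 2 (Fin 3 → ℝ)) b))

/-!
The connecting path is explicit. Write `wᵢ = aᵢ nᵢ` with `nᵢ` a unit vector; then `|aᵢ - 1|` and
`‖nᵢ - q̂‖` are `O(η)`, and `n₁ = R_m(α) n₀` for a rotation `R_m(α)` about an axis `m ⊥ n₀` by an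
angle `α = O(η)`. Take `u(t) = R_m(s(t)) R_{n₀}(θ(t)) u₀`, where `s` rises from `0` to `α` with
`s' = 0` at both ends and `θ'` runs linearly from `a₀` to `a₁`. Rotations preserve the cross
product, which gives `w = u × u' = θ' R_m(s) n₀ + s' (m - ⟪u, m⟫ u)`. Hence `w` stays `O(η)`-close
to `q̂` and `w'` is `O(η)`, so the first and last terms of the energy density are `O(η²)`; the `G`
term is small because `G` is continuous near the finite set `Q_k`, on which it vanishes. The end
time `T ∈ [1, 8]` is chosen so that the final phase `θ(T) = T (a₀ + a₁) / 2` is an angle at which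
`R_m(α) R_{n₀}(θ(T)) u₀ = u₁`; such angles exist because `R_m(-α) u₁ ⊥ n₀`.
-/

local notation "E3" => EuclideanSpace ℝ (Fin 3)

noncomputable section

def cross3L : E3 →ₗ[ℝ] E3 →ₗ[ℝ] E3 :=
  (crossProduct.compl₁₂ (WithLp.linearEquiv 2 ℝ (Fin 3 → ℝ)).toLinearMap
    (WithLp.linearEquiv 2 ℝ (Fin 3 → ℝ)).toLinearMap).compr₂
    (WithLp.linearEquiv 2 ℝ (Fin 3 → ℝ)).symm.toLinearMap

lemma cross3_apply_zero (a b : E3) : cross3 a b 0 = a 1 * b 2 - a 2 * b 1 := by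
  simp [cross3, crossProduct]

lemma cross3_apply_one (a b : E3) : cross3 a b 1 = a 2 * b 0 - a 0 * b 2 := by
  simp [cross3, crossProduct]

lemma cross3_apply_two (a b : E3) : cross3 a b 2 = a 0 * b 1 - a 1 * b 0 := by
  simp [cross3, crossProduct]

lemma ext_fin_three {x y : E3} (h₀ : x 0 = y 0) (h₁ : x 1 = y 1) (h₂ : x 2 = y 2) : x = y := by
  ext i; fin_cases i <;> assumption

lemma inner_fin_three (x y : E3) : ⟪x, y⟫ = x 0 * y 0 + x 1 * y 1 + x 2 * y 2 := by
  simp [PiLp.inner_apply, Fin.sum_univ_three, mul_comm]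

@[simp] lemma cross3_add_right (a b c : E3) : cross3 a (b + c) = cross3 a b + cross3 a c :=
  (cross3L a).map_add b c

@[simp] lemma cross3_smul_left (r : ℝ) (a b : E3) : cross3 (r • a) b = r • cross3 a b :=
  cross3L.map_smul₂ r a b

@[simp] lemma cross3_smul_right (r : ℝ) (a b : E3) : cross3 a (r • b) = r • cross3 a b :=
  (cross3L a).map_smul r b

@[simp] lemma cross3_sub_right (a b c : E3) : cross3 a (b - c) = cross3 a b - cross3 a c :=
  (cross3L a).map_sub b c

@[simp] lemma cross3_zero_left (a : E3) : cross3 0 a = 0 := cross3L.map_zero₂ a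

@[simp] lemma cross3_zero_right (a : E3) : cross3 a 0 = 0 := (cross3L a).map_zero

@[simp] lemma cross3_self (a : E3) : cross3 a a = 0 := by
  apply ext_fin_three <;>
    simp only [cross3_apply_zero, cross3_apply_one, cross3_apply_two, PiLp.zero_apply] <;> ring

lemma cross3_anticomm (a b : E3) : cross3 b a = -cross3 a b := by
  apply ext_fin_three <;>
    simp only [cross3_apply_zero, cross3_apply_one, cross3_apply_two, PiLp.neg_apply] <;> ring

@[simp] lemma inner_self_cross3 (a b : E3) : ⟪a, cross3 a b⟫ = 0 := by
  simp only [inner_fin_three, cross3_apply_zero, cross3_apply_one, cross3_apply_two]; ring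

@[simp] lemma inner_cross3_self (a b : E3) : ⟪b, cross3 a b⟫ = 0 := by
  simp only [inner_fin_three, cross3_apply_zero, cross3_apply_one, cross3_apply_two]; ring

lemma cross3_cross3 (a b c : E3) : cross3 a (cross3 b c) = ⟪a, c⟫ • b - ⟪a, b⟫ • c := by
  apply ext_fin_three <;>
    simp only [cross3_apply_zero, cross3_apply_one, cross3_apply_two, inner_fin_three,
      PiLp.sub_apply, PiLp.smul_apply, smul_eq_mul] <;> ring

lemma cross3_leibniz (a b c : E3) :
    cross3 a (cross3 b c) = cross3 (cross3 a b) c + cross3 b (cross3 a c) := by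
  apply ext_fin_three <;>
    simp only [cross3_apply_zero, cross3_apply_one, cross3_apply_two, PiLp.add_apply] <;> ring

lemma inner_cross3_cross3 (a b c : E3) :
    ⟪cross3 a b, cross3 a c⟫ = ⟪a, a⟫ * ⟪b, c⟫ - ⟪a, b⟫ * ⟪a, c⟫ := by
  simp only [inner_fin_three, cross3_apply_zero, cross3_apply_one, cross3_apply_two]; ring

lemma inner_cross3_left (a b c : E3) : ⟪cross3 a b, c⟫ = -⟪b, cross3 a c⟫ := by
  simp only [inner_fin_three, cross3_apply_zero, cross3_apply_one, cross3_apply_two]; ring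

lemma norm_cross3_sq (a b : E3) : ‖cross3 a b‖ ^ 2 = ‖a‖ ^ 2 * ‖b‖ ^ 2 - ⟪a, b⟫ ^ 2 := by
  simp only [← real_inner_self_eq_norm_sq, inner_cross3_cross3]; ring

lemma norm_cross3_le (a b : E3) : ‖cross3 a b‖ ≤ ‖a‖ * ‖b‖ := by
  refine (pow_le_pow_iff_left₀ (norm_nonneg _) (by positivity) two_ne_zero).mp ?_
  rw [norm_cross3_sq, mul_pow]
  nlinarith [sq_nonneg ⟪a, b⟫]

lemma norm_cross3_of_inner_eq_zero {a b : E3} (h : ⟪a, b⟫ = 0) : ‖cross3 a b‖ = ‖a‖ * ‖b‖ := by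
  rw [← sq_eq_sq₀ (norm_nonneg _) (by positivity), norm_cross3_sq, h]
  ring

def cross3CLM : E3 →L[ℝ] E3 →L[ℝ] E3 :=
  cross3L.mkContinuous₂ 1 fun a b => by rw [one_mul]; exact norm_cross3_le a b

@[simp] lemma cross3CLM_apply (a b : E3) : cross3CLM a b = cross3 a b := rfl

lemma hasDerivAt_cross3 {f g : ℝ → E3} {f' g' : E3} {t : ℝ} (hf : HasDerivAt f f' t)
    (hg : HasDerivAt g g' t) :
    HasDerivAt (fun s => cross3 (f s) (g s)) (cross3 f' (g t) + cross3 (f t) g') t := by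
  simpa using (cross3CLM.hasFDerivAt.comp_hasDerivAt t hf).clm_apply hg

lemma contDiff_cross3 {n : WithTop ℕ∞} {f g : ℝ → E3} (hf : ContDiff ℝ n f)
    (hg : ContDiff ℝ n g) : ContDiff ℝ n (fun s => cross3 (f s) (g s)) :=
  (cross3CLM.contDiff.comp hf).clm_apply hg

/-- Rotation about the unit axis `m` by the angle `s` (Rodrigues' formula). -/
def axisRotation (m : E3) (s : ℝ) (x : E3) : E3 :=
  Real.cos s • x + Real.sin s • cross3 m x + ((1 - Real.cos s) * ⟪m, x⟫) • m

section AxisRotation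

variable {m : E3}

@[simp] lemma axisRotation_zero (m x : E3) : axisRotation m 0 x = x := by
  simp [axisRotation]

@[simp] lemma axisRotation_apply_zero (m : E3) (s : ℝ) : axisRotation m s 0 = 0 := by
  simp [axisRotation]

lemma axisRotation_of_inner_eq_zero {x : E3} (h : ⟪m, x⟫ = 0) (s : ℝ) :
    axisRotation m s x = Real.cos s • x + Real.sin s • cross3 m x := by
  simp [axisRotation, h]

lemma axisRotation_smul (s r : ℝ) (x : E3) :
    axisRotation m s (r • x) = r • axisRotation m s x := by
  simp only [axisRotation, cross3_smul_right, inner_smul_right]; module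

lemma axisRotation_axis (hm : ‖m‖ = 1) (s : ℝ) : axisRotation m s m = m := by
  simp [axisRotation, hm]

lemma inner_axisRotation (hm : ‖m‖ = 1) (s : ℝ) (x y : E3) :
    ⟪axisRotation m s x, axisRotation m s y⟫ = ⟪x, y⟫ := by
  have hmm : ⟪m, m⟫ = 1 := by simp [hm]
  simp only [axisRotation, inner_add_left, inner_add_right, real_inner_smul_left,
    real_inner_smul_right, inner_cross3_cross3, inner_self_cross3, hmm]
  linear_combination Real.cos s * Real.sin s * inner_cross3_left m x y
    + (1 - Real.cos s) * ⟪m, y⟫ * Real.sin s * (real_inner_comm m (cross3 m x)).trans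
      (inner_self_cross3 m x)
    + (1 - Real.cos s) * ⟪m, y⟫ * Real.cos s * real_inner_comm m x
    + (⟪x, y⟫ - ⟪m, x⟫ * ⟪m, y⟫) * Real.sin_sq_add_cos_sq s

lemma norm_axisRotation (hm : ‖m‖ = 1) (s : ℝ) (x : E3) : ‖axisRotation m s x‖ = ‖x‖ := by
  rw [norm_eq_sqrt_real_inner, inner_axisRotation hm, ← norm_eq_sqrt_real_inner]

lemma inner_axisRotation_axis (hm : ‖m‖ = 1) (s : ℝ) (x : E3) :
    ⟪axisRotation m s x, m⟫ = ⟪x, m⟫ := by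
  calc ⟪axisRotation m s x, m⟫ = ⟪axisRotation m s x, axisRotation m s m⟫ := by
        rw [axisRotation_axis hm]
    _ = ⟪x, m⟫ := inner_axisRotation hm s x m

lemma axisRotation_neg_angle (hm : ‖m‖ = 1) (s : ℝ) (x : E3) :
    axisRotation m s (axisRotation m (-s) x) = x := by
  have hmm : ⟪m, m⟫ = 1 := by simp [hm]
  simp only [axisRotation, Real.cos_neg, Real.sin_neg, cross3_add_right, cross3_smul_right,
    cross3_self, cross3_cross3, inner_add_right, real_inner_smul_right, inner_self_cross3, hmm]
  match_scalars
  · linear_combination Real.sin_sq_add_cos_sq s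
  · ring
  · linear_combination -⟪m, x⟫ * Real.sin_sq_add_cos_sq s

lemma hasDerivAt_axisRotation (hm : ‖m‖ = 1) {s : ℝ → ℝ} {x : ℝ → E3} {s' t : ℝ} {x' : E3}
    (hs : HasDerivAt s s' t) (hx : HasDerivAt x x' t) :
    HasDerivAt (fun τ => axisRotation m (s τ) (x τ))
      (s' • cross3 m (axisRotation m (s t) (x t)) + axisRotation m (s t) x') t := by
  have hmm : ⟪m, m⟫ = 1 := by simp [hm]
  have hcos := (Real.hasDerivAt_cos (s t)).comp t hs
  have hsin := (Real.hasDerivAt_sin (s t)).comp t hs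
  have hcross := hasDerivAt_cross3 (hasDerivAt_const t m) hx
  have hinner := (hasDerivAt_const t m).inner ℝ hx
  refine (((hcos.smul hx).add (hsin.smul hcross)).add
    (((hcos.const_sub 1).mul hinner).smul_const m)).congr_deriv ?_
  simp only [axisRotation, Function.comp_apply, cross3_add_right, cross3_smul_right, cross3_self,
    cross3_cross3, hmm, cross3_zero_left, inner_zero_left]
  module

lemma contDiff_axisRotation {n : WithTop ℕ∞} {s : ℝ → ℝ} {x : ℝ → E3}
    (hs : ContDiff ℝ n s) (hx : ContDiff ℝ n x) :
    ContDiff ℝ n (fun τ => axisRotation m (s τ) (x τ)) := by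
  have hcos := Real.contDiff_cos.comp hs
  exact ((hcos.smul hx).add
    ((Real.contDiff_sin.comp hs).smul (contDiff_cross3 contDiff_const hx))).add
    (((contDiff_const.sub hcos).mul (contDiff_const.inner ℝ hx)).smul contDiff_const)

lemma norm_eq_of_hasDerivAt_cross3 {g v : ℝ → E3}
    (hg : ∀ t, HasDerivAt g (cross3 (v t) (g t)) t) (s t : ℝ) : ‖g s‖ = ‖g t‖ := by
  have hsq : ∀ t, HasDerivAt (fun τ => ⟪g τ, g τ⟫) 0 t := fun t => by
    simpa [real_inner_comm (g t)] using (hg t).inner ℝ (hg t)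
  have := is_const_of_deriv_eq_zero (fun t => (hsq t).differentiableAt) (fun t => (hsq t).deriv) s t
  simpa [real_inner_self_eq_norm_sq] using this

lemma cross3_axisRotation (hm : ‖m‖ = 1) (s : ℝ) (x y : E3) :
    cross3 (axisRotation m s x) (axisRotation m s y) = axisRotation m s (cross3 x y) := by
  -- the difference of the two sides solves `g' = m × g` and vanishes at `s = 0`
  set g : ℝ → E3 := fun σ =>
    cross3 (axisRotation m σ x) (axisRotation m σ y) - axisRotation m σ (cross3 x y)
  have hrot (z : E3) (σ : ℝ) :=
    hasDerivAt_axisRotation hm (hasDerivAt_id' σ) (hasDerivAt_const σ z)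
  have hg (σ : ℝ) : HasDerivAt g (cross3 m (g σ)) σ := by
    refine ((hasDerivAt_cross3 (hrot x σ) (hrot y σ)).sub (hrot (cross3 x y) σ)).congr_deriv ?_
    simp only [g, one_smul, axisRotation_apply_zero, add_zero, cross3_sub_right, cross3_leibniz m]
  have := norm_eq_of_hasDerivAt_cross3 (v := fun _ => m) hg s 0
  simpa [g, sub_eq_zero] using this

lemma norm_axisRotation_sub_le (hm : ‖m‖ = 1) {x : E3} (h : ⟪m, x⟫ = 0) (s : ℝ) :
    ‖axisRotation m s x - x‖ ≤ |s| * ‖x‖ := by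
  have hmx : ‖cross3 m x‖ = ‖x‖ := by rw [norm_cross3_of_inner_eq_zero h, hm, one_mul]
  refine (pow_le_pow_iff_left₀ (norm_nonneg _) (by positivity) two_ne_zero).mp ?_
  have key : ‖axisRotation m s x - x‖ ^ 2 = 2 * (1 - Real.cos s) * ‖x‖ ^ 2 := by
    rw [axisRotation_of_inner_eq_zero h, ← real_inner_self_eq_norm_sq]
    simp only [inner_add_left, inner_add_right, inner_sub_left, inner_sub_right,
      real_inner_smul_left, real_inner_smul_right, inner_cross3_self,
      real_inner_comm x (cross3 m x)]
    rw [real_inner_self_eq_norm_sq, real_inner_self_eq_norm_sq, hmx]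
    linear_combination ‖x‖ ^ 2 * Real.sin_sq_add_cos_sq s
  rw [key, mul_pow, sq_abs]
  nlinarith [Real.one_sub_sq_div_two_le_cos (x := s), sq_nonneg ‖x‖]

end AxisRotation

lemma exists_cos_sin_eq {X Y : ℝ} (h : X ^ 2 + Y ^ 2 = 1) (c : ℝ) :
    ∃ β ∈ Set.Ico c (c + 2 * Real.pi), Real.cos β = X ∧ Real.sin β = Y := by
  set z : ℂ := ⟨X, Y⟩
  have hz : ‖z‖ = 1 := by simp [Complex.norm_eq_sqrt_sq_add_sq, z, h]
  have hz0 : z ≠ 0 := norm_ne_zero_iff.mp (by simp [hz])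
  refine ⟨toIcoMod Real.two_pi_pos c z.arg, toIcoMod_mem_Ico _ _ _, ?_, ?_⟩
  · rw [← self_sub_toIcoDiv_zsmul, zsmul_eq_mul, Real.cos_sub_int_mul_two_pi,
      Complex.cos_arg hz0, hz, div_one]
  · rw [← self_sub_toIcoDiv_zsmul, zsmul_eq_mul, Real.sin_sub_int_mul_two_pi,
      Complex.sin_arg, hz, div_one]

lemma eq_zero_of_orthogonal_cross3 {a b r : E3} (ha : ‖a‖ = 1) (hb : ‖b‖ = 1) (hab : ⟪a, b⟫ = 0)
    (hra : ⟪r, a⟫ = 0) (hrb : ⟪r, b⟫ = 0) (hrab : ⟪r, cross3 a b⟫ = 0) : r = 0 := by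
  have habn : ‖cross3 a b‖ = 1 := by rw [norm_cross3_of_inner_eq_zero hab, ha, hb, one_mul]
  have hcross : cross3 r (cross3 a b) = 0 := by simp [cross3_cross3, hra, hrb]
  have := norm_cross3_sq r (cross3 a b)
  rw [hcross, habn, hrab, norm_zero] at this
  have hr : ‖r‖ ^ 2 = 0 := by simpa using this.symm
  simpa using hr

lemma exists_axisRotation_eq_of_orthogonal {n u v : E3} (hn : ‖n‖ = 1) (hu : ‖u‖ = 1)
    (hv : ‖v‖ = 1) (hun : ⟪u, n⟫ = 0) (hvn : ⟪v, n⟫ = 0) (c : ℝ) :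
    ∃ β ∈ Set.Ico c (c + 2 * Real.pi), axisRotation n β u = v := by
  have hnu : ‖cross3 n u‖ = 1 := by
    rw [norm_cross3_of_inner_eq_zero ((real_inner_comm _ _).trans hun), hn, hu, one_mul]
  have huu : ⟪u, u⟫ = 1 := by simp [hu]
  have hnunu : ⟪cross3 n u, cross3 n u⟫ = 1 := by simp [hnu]
  have hu_nu : cross3 u (cross3 n u) = n := by simp [cross3_cross3, hu, hun]
  have hdecomp : v = ⟪v, u⟫ • u + ⟪v, cross3 n u⟫ • cross3 n u := by
    rw [← sub_eq_zero]
    refine eq_zero_of_orthogonal_cross3 hu hnu (inner_cross3_self n u) ?_ ?_ ?_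
    · simp only [inner_sub_left, inner_add_left, real_inner_smul_left, huu,
        real_inner_comm u (cross3 n u), inner_cross3_self]
      ring
    · simp only [inner_sub_left, inner_add_left, real_inner_smul_left, hnunu, inner_cross3_self]
      ring
    · simp only [hu_nu, inner_sub_left, inner_add_left, real_inner_smul_left, hvn, hun,
        real_inner_comm n (cross3 n u), inner_self_cross3]
      ring
  have hXY : ⟪v, u⟫ ^ 2 + ⟪v, cross3 n u⟫ ^ 2 = 1 := by
    have h := congrArg (fun w => ⟪w, w⟫) hdecomp
    simp only [inner_add_left, inner_add_right, real_inner_smul_left, real_inner_smul_right,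
      huu, hnunu, inner_cross3_self, real_inner_comm u (cross3 n u)] at h
    rw [real_inner_self_eq_norm_sq, hv] at h
    linear_combination -h
  obtain ⟨β, hβ, hcos, hsin⟩ := exists_cos_sin_eq hXY c
  refine ⟨β, hβ, ?_⟩
  rw [axisRotation_of_inner_eq_zero ((real_inner_comm _ _).trans hun), hcos, hsin, ← hdecomp]

lemma exists_axisRotation_eq {n₀ n₁ e : E3} (h₀ : ‖n₀‖ = 1) (h₁ : ‖n₁‖ = 1) (he : ‖e‖ = 1)
    (hen : ⟪e, n₀⟫ = 0) (hc : 0 ≤ ⟪n₀, n₁⟫) :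
    ∃ m α, ‖m‖ = 1 ∧ ⟪m, n₀⟫ = 0 ∧ 0 ≤ α ∧ α ≤ 2 * ‖n₀ - n₁‖ ∧ axisRotation m α n₀ = n₁ := by
  set N := cross3 n₀ n₁
  obtain ⟨m, hm, hmn, hmN⟩ : ∃ m, ‖m‖ = 1 ∧ ⟪m, n₀⟫ = 0 ∧ ‖N‖ • m = N := by
    by_cases hN : N = 0
    · exact ⟨e, he, hen, by simp [hN]⟩
    · refine ⟨‖N‖⁻¹ • N, norm_smul_inv_norm hN, ?_, ?_⟩
      · simp only [N, real_inner_smul_left, real_inner_comm n₀ (cross3 n₀ n₁), inner_self_cross3,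
          mul_zero]
      · rw [smul_smul, mul_inv_cancel₀ (norm_ne_zero_iff.mpr hN), one_smul]
  have hc1 : |⟪n₀, n₁⟫| ≤ 1 := by simpa [h₀, h₁] using abs_real_inner_le_norm n₀ n₁
  have hN : ‖N‖ = √(1 - ⟪n₀, n₁⟫ ^ 2) := by
    rw [← Real.sqrt_sq (norm_nonneg N), norm_cross3_sq, h₀, h₁, one_pow, one_mul]
  have hNle : ‖N‖ ≤ ‖n₀ - n₁‖ := by
    calc ‖N‖ = ‖cross3 n₀ (n₁ - n₀)‖ := by simp [N]
      _ ≤ ‖n₀‖ * ‖n₁ - n₀‖ := norm_cross3_le _ _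
      _ = ‖n₀ - n₁‖ := by rw [h₀, one_mul, norm_sub_rev]
  have hα := Real.arccos_le_pi_div_two.mpr hc
  refine ⟨m, Real.arccos ⟪n₀, n₁⟫, hm, hmn, Real.arccos_nonneg _, ?_, ?_⟩
  · have hjordan := Real.mul_le_sin (Real.arccos_nonneg ⟪n₀, n₁⟫) hα
    rw [Real.sin_arccos, ← hN] at hjordan
    have hπ := Real.pi_pos
    rw [div_mul_eq_mul_div, div_le_iff₀ hπ] at hjordan
    nlinarith [Real.pi_lt_four, norm_nonneg N]
  · rw [axisRotation_of_inner_eq_zero hmn, Real.cos_arccos (abs_le.mp hc1).1 (abs_le.mp hc1).2,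
      Real.sin_arccos, ← hN, ← cross3_smul_left, hmN, cross3_anticomm, cross3_cross3]
    simp [h₀]

/-- The field `w = u × u'` of the statement. -/
def chirality (u : ℝ → E3) (t : ℝ) : E3 := cross3 (u t) (deriv u t)

def spinPath (m n u₀ : E3) (θ s : ℝ → ℝ) (t : ℝ) : E3 :=
  axisRotation m (s t) (axisRotation n (θ t) u₀)

section SpinPath

variable {m n u₀ : E3} {θ θ' θ'' s s' s'' : ℝ → ℝ}

lemma norm_spinPath (hm : ‖m‖ = 1) (hn : ‖n‖ = 1) (hu₀ : ‖u₀‖ = 1) (t : ℝ) :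
    ‖spinPath m n u₀ θ s t‖ = 1 := by
  simp [spinPath, norm_axisRotation, hm, hn, hu₀]

lemma contDiff_spinPath {k : WithTop ℕ∞} (hθ : ContDiff ℝ k θ) (hs : ContDiff ℝ k s) :
    ContDiff ℝ k (spinPath m n u₀ θ s) :=
  contDiff_axisRotation hs (contDiff_axisRotation hθ contDiff_const)

lemma hasDerivAt_spinPath (hm : ‖m‖ = 1) (hn : ‖n‖ = 1) (hθ : ∀ t, HasDerivAt θ (θ' t) t)
    (hs : ∀ t, HasDerivAt s (s' t) t) (t : ℝ) :
    HasDerivAt (spinPath m n u₀ θ s) (s' t • cross3 m (spinPath m n u₀ θ s t)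
      + θ' t • axisRotation m (s t) (cross3 n (axisRotation n (θ t) u₀))) t := by
  have hv := hasDerivAt_axisRotation hn (hθ t) (hasDerivAt_const t u₀)
  refine (hasDerivAt_axisRotation hm (hs t) hv).congr_deriv ?_
  simp [spinPath, axisRotation_smul]

lemma chirality_spinPath (hm : ‖m‖ = 1) (hn : ‖n‖ = 1) (hu₀ : ‖u₀‖ = 1) (hu₀n : ⟪u₀, n⟫ = 0)
    (hθ : ∀ t, HasDerivAt θ (θ' t) t) (hs : ∀ t, HasDerivAt s (s' t) t) :
    chirality (spinPath m n u₀ θ s) = fun t => θ' t • axisRotation m (s t) n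
      + s' t • (m - ⟪spinPath m n u₀ θ s t, m⟫ • spinPath m n u₀ θ s t) := by
  ext1 t
  have hv : ⟪axisRotation n (θ t) u₀, axisRotation n (θ t) u₀⟫ = 1 := by
    simp [norm_axisRotation hn, hu₀]
  have hvn : ⟪axisRotation n (θ t) u₀, n⟫ = 0 := by rw [inner_axisRotation_axis hn, hu₀n]
  have hu : ⟪spinPath m n u₀ θ s t, spinPath m n u₀ θ s t⟫ = 1 := by
    simp [norm_spinPath hm hn hu₀]
  rw [chirality, (hasDerivAt_spinPath hm hn hθ hs t).deriv, cross3_add_right, cross3_smul_right,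
    cross3_smul_right, cross3_cross3, hu, spinPath, cross3_axisRotation hm, cross3_cross3, hv,
    hvn, one_smul, one_smul, zero_smul, sub_zero, add_comm]

lemma norm_sub_inner_smul_le {m u : E3} (hm : ‖m‖ = 1) (hu : ‖u‖ = 1) :
    ‖m - ⟪u, m⟫ • u‖ ≤ 2 := by
  have := abs_real_inner_le_norm u m
  calc ‖m - ⟪u, m⟫ • u‖ ≤ ‖m‖ + |⟪u, m⟫| * ‖u‖ := by
        rw [← Real.norm_eq_abs, ← norm_smul]; exact norm_sub_le _ _
    _ ≤ 2 := by rw [hm, hu] at *; linarith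

lemma norm_chirality_spinPath_sub_le (hm : ‖m‖ = 1) (hn : ‖n‖ = 1) (hu₀ : ‖u₀‖ = 1)
    (hu₀n : ⟪u₀, n⟫ = 0) (hmn : ⟪m, n⟫ = 0) (hθ : ∀ t, HasDerivAt θ (θ' t) t)
    (hs : ∀ t, HasDerivAt s (s' t) t) (q : E3) (t : ℝ) :
    ‖chirality (spinPath m n u₀ θ s) t - q‖ ≤ |θ' t - 1| + |s t| + ‖n - q‖ + 2 * |s' t| := by
  rw [chirality_spinPath hm hn hu₀ hu₀n hθ hs]
  have hP := norm_sub_inner_smul_le hm (norm_spinPath (θ := θ) (s := s) hm hn hu₀ t)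
  have hR := norm_axisRotation_sub_le hm hmn (s t)
  rw [hn, mul_one] at hR
  calc _ = ‖(θ' t - 1) • axisRotation m (s t) n + (axisRotation m (s t) n - n) + (n - q)
        + s' t • (m - ⟪spinPath m n u₀ θ s t, m⟫ • spinPath m n u₀ θ s t)‖ := by
        congr 1; module
    _ ≤ _ := norm_add₄_le
    _ ≤ _ := by
      rw [norm_smul, norm_smul, norm_axisRotation hm, hn, Real.norm_eq_abs, Real.norm_eq_abs]
      nlinarith [abs_nonneg (s' t)]

lemma norm_deriv_spinPath_le (hm : ‖m‖ = 1) (hn : ‖n‖ = 1) (hu₀ : ‖u₀‖ = 1)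
    (hθ : ∀ t, HasDerivAt θ (θ' t) t) (hs : ∀ t, HasDerivAt s (s' t) t) (t : ℝ) :
    ‖deriv (spinPath m n u₀ θ s) t‖ ≤ |s' t| + |θ' t| := by
  have h₁ := norm_cross3_le m (spinPath m n u₀ θ s t)
  have h₂ := norm_cross3_le n (axisRotation n (θ t) u₀)
  rw [hm, norm_spinPath hm hn hu₀] at h₁
  rw [hn, norm_axisRotation hn, hu₀] at h₂
  rw [(hasDerivAt_spinPath hm hn hθ hs t).deriv]
  refine (norm_add_le _ _).trans ?_
  rw [norm_smul, norm_smul, norm_axisRotation hm, Real.norm_eq_abs, Real.norm_eq_abs]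
  nlinarith [abs_nonneg (s' t), abs_nonneg (θ' t)]

lemma hasDerivAt_chirality_spinPath (hm : ‖m‖ = 1) (hn : ‖n‖ = 1) (hu₀ : ‖u₀‖ = 1)
    (hu₀n : ⟪u₀, n⟫ = 0) (hθ : ∀ t, HasDerivAt θ (θ' t) t) (hθ' : ∀ t, HasDerivAt θ' (θ'' t) t)
    (hs : ∀ t, HasDerivAt s (s' t) t) (hs' : ∀ t, HasDerivAt s' (s'' t) t) (t : ℝ) :
    let u := spinPath m n u₀ θ s
    HasDerivAt (chirality u)
      (θ'' t • axisRotation m (s t) n + θ' t • (s' t • cross3 m (axisRotation m (s t) n))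
        + (s'' t • (m - ⟪u t, m⟫ • u t)
          - s' t • (⟪deriv u t, m⟫ • u t + ⟪u t, m⟫ • deriv u t))) t := by
  intro u
  have hu : HasDerivAt u (deriv u t) t :=
    (hasDerivAt_spinPath hm hn hθ hs t).differentiableAt.hasDerivAt
  rw [chirality_spinPath hm hn hu₀ hu₀n hθ hs]
  refine (((hθ' t).smul (hasDerivAt_axisRotation hm (hs t) (hasDerivAt_const t n))).add
    ((hs' t).smul ((hasDerivAt_const t m).sub
      ((hu.inner ℝ (hasDerivAt_const t m)).smul hu)))).congr_deriv ?_
  simp only [axisRotation_apply_zero, add_zero, inner_zero_right, zero_add, Pi.sub_apply,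
    Pi.smul_apply']
  module

lemma norm_deriv_chirality_spinPath_le (hm : ‖m‖ = 1) (hn : ‖n‖ = 1) (hu₀ : ‖u₀‖ = 1)
    (hu₀n : ⟪u₀, n⟫ = 0) (hθ : ∀ t, HasDerivAt θ (θ' t) t) (hθ' : ∀ t, HasDerivAt θ' (θ'' t) t)
    (hs : ∀ t, HasDerivAt s (s' t) t) (hs' : ∀ t, HasDerivAt s' (s'' t) t) (t : ℝ) :
    ‖deriv (chirality (spinPath m n u₀ θ s)) t‖
      ≤ |θ'' t| + |θ' t| * |s' t| + 2 * |s'' t| + 2 * |s' t| * (|s' t| + |θ' t|) := by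
  set u := spinPath m n u₀ θ s
  have hut : ‖u t‖ = 1 := norm_spinPath hm hn hu₀ t
  have hu' := norm_deriv_spinPath_le hm hn hu₀ hθ hs t
  have hP := norm_sub_inner_smul_le hm hut
  have hmR : ‖cross3 m (axisRotation m (s t) n)‖ ≤ 1 := by
    simpa [hm, norm_axisRotation hm, hn] using norm_cross3_le m (axisRotation m (s t) n)
  have hE : ‖⟪deriv u t, m⟫ • u t + ⟪u t, m⟫ • deriv u t‖ ≤ 2 * ‖deriv u t‖ := by
    have h₁ := abs_real_inner_le_norm (deriv u t) m
    have h₂ := abs_real_inner_le_norm (u t) m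
    rw [hm] at h₁ h₂
    rw [hut] at h₂
    refine (norm_add_le _ _).trans ?_
    rw [norm_smul, norm_smul, hut, Real.norm_eq_abs, Real.norm_eq_abs]
    nlinarith [norm_nonneg (deriv u t)]
  rw [(hasDerivAt_chirality_spinPath hm hn hu₀ hu₀n hθ hθ' hs hs' t).deriv]
  calc _ ≤ _ := norm_add_le _ _
    _ ≤ (|θ'' t| + |θ' t| * |s' t|) + (2 * |s'' t| + 2 * |s' t| * (|s' t| + |θ' t|)) :=
        add_le_add ((norm_add_le _ _).trans ?_) ((norm_sub_le _ _).trans ?_)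
    _ = _ := by ring
  · rw [norm_smul, norm_smul, norm_smul, norm_axisRotation hm, hn, Real.norm_eq_abs,
      Real.norm_eq_abs, mul_one]
    gcongr
    exact mul_le_of_le_one_right (abs_nonneg _) hmR
  · rw [norm_smul, norm_smul, Real.norm_eq_abs, Real.norm_eq_abs]
    nlinarith [abs_nonneg (s' t), abs_nonneg (s'' t)]

end SpinPath

def phase (a b T t : ℝ) : ℝ := a * t + (b - a) * t ^ 2 / (2 * T)

/-- `3x² - 2x³` has values `0, 1` and slope `0` at `x = 0, 1`, so the rotation starts and
stops at rest. -/
def turn (α T t : ℝ) : ℝ := α * (3 * (t / T) ^ 2 - 2 * (t / T) ^ 3)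

section Ramp

variable {a b α T t η : ℝ}

lemma hasDerivAt_phase (a b T t : ℝ) : HasDerivAt (phase a b T) (a + (b - a) * (t / T)) t := by
  refine (((hasDerivAt_id' t).const_mul a).add
    (((hasDerivAt_pow 2 t).const_mul (b - a)).div_const (2 * T))).congr_deriv ?_
  ring

lemma hasDerivAt_phase_deriv (a b T t : ℝ) :
    HasDerivAt (fun t => a + (b - a) * (t / T)) ((b - a) / T) t := by
  refine (((hasDerivAt_id' t).div_const T).const_mul (b - a)).const_add a |>.congr_deriv ?_
  ring

lemma hasDerivAt_turn (α T t : ℝ) :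
    HasDerivAt (turn α T) (α * (6 * (t / T) * (1 - t / T)) / T) t := by
  have hx := (hasDerivAt_id' t).div_const T
  refine (((hx.pow 2).const_mul 3).sub ((hx.pow 3).const_mul 2)).const_mul α |>.congr_deriv ?_
  simp only [Nat.cast_ofNat]
  ring

lemma hasDerivAt_turn_deriv (α T t : ℝ) :
    HasDerivAt (fun t => α * (6 * (t / T) * (1 - t / T)) / T)
      (α * (6 - 12 * (t / T)) / T ^ 2) t := by
  have hx := (hasDerivAt_id' t).div_const T
  refine ((((hx.const_mul 6).mul (hx.const_sub 1)).const_mul α).div_const T).congr_deriv ?_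
  ring

lemma div_mem_Icc_zero_one (hT : 0 < T) (ht : t ∈ Set.Icc 0 T) : t / T ∈ Set.Icc 0 1 :=
  ⟨div_nonneg ht.1 hT.le, (div_le_one hT).mpr ht.2⟩

lemma abs_phase_deriv_sub_one_le (hT : 0 < T) (ht : t ∈ Set.Icc 0 T) :
    |a + (b - a) * (t / T) - 1| ≤ |a - 1| + |b - a| := by
  obtain ⟨hx0, hx1⟩ := div_mem_Icc_zero_one hT ht
  calc |a + (b - a) * (t / T) - 1| = |(a - 1) + (b - a) * (t / T)| := by ring_nf
    _ ≤ |a - 1| + |b - a| * (t / T) := by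
        simpa [abs_mul, abs_of_nonneg hx0] using abs_add_le (a - 1) ((b - a) * (t / T))
    _ ≤ |a - 1| + |b - a| := by nlinarith [abs_nonneg (b - a)]

lemma abs_phase_deriv2_le (hT : 1 ≤ T) : |(b - a) / T| ≤ |b - a| := by
  rw [abs_div, abs_of_pos (by linarith : (0 : ℝ) < T)]
  exact div_le_self (abs_nonneg _) hT

lemma abs_turn_le (hα : 0 ≤ α) (hT : 0 < T) (ht : t ∈ Set.Icc 0 T) : |turn α T t| ≤ α := by
  obtain ⟨hx0, hx1⟩ := div_mem_Icc_zero_one hT ht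
  rw [turn, abs_mul, abs_of_nonneg hα]
  refine mul_le_of_le_one_right hα (abs_le.mpr ⟨?_, ?_⟩)
  · nlinarith [mul_nonneg (sq_nonneg (t / T)) (by linarith : 0 ≤ 3 - 2 * (t / T))]
  · nlinarith [mul_nonneg (sq_nonneg (t / T - 1)) (by linarith : 0 ≤ 1 + 2 * (t / T))]

lemma abs_turn_deriv_le (hα : 0 ≤ α) (hT : 1 ≤ T) (ht : t ∈ Set.Icc 0 T) :
    |α * (6 * (t / T) * (1 - t / T)) / T| ≤ 3 / 2 * α := by
  obtain ⟨hx0, hx1⟩ := div_mem_Icc_zero_one (by linarith) ht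
  rw [abs_div, abs_mul, abs_of_nonneg hα, abs_of_pos (by linarith : 0 < T)]
  refine (div_le_self (by positivity) hT).trans ?_
  rw [mul_comm]
  refine mul_le_mul_of_nonneg_right (abs_le.mpr ⟨?_, ?_⟩) hα <;>
    nlinarith [mul_nonneg hx0 (sub_nonneg.mpr hx1), sq_nonneg (t / T - 1 / 2)]

lemma abs_turn_deriv2_le (hα : 0 ≤ α) (hT : 1 ≤ T) (ht : t ∈ Set.Icc 0 T) :
    |α * (6 - 12 * (t / T)) / T ^ 2| ≤ 6 * α := by
  obtain ⟨hx0, hx1⟩ := div_mem_Icc_zero_one (by linarith) ht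
  rw [abs_div, abs_mul, abs_of_nonneg hα, abs_of_pos (by positivity : 0 < T ^ 2)]
  refine (div_le_self (by positivity) (one_le_pow₀ hT)).trans ?_
  rw [mul_comm]
  exact mul_le_mul_of_nonneg_right (abs_le.mpr ⟨by linarith, by linarith⟩) hα

lemma abs_sub_le_of_abs_sub_one_le (ha : |a - 1| ≤ η) (hb : |b - 1| ≤ η) : |b - a| ≤ 2 * η := by
  rw [abs_le] at *
  constructor <;> linarith

end Ramp

def rampPath (m n u₀ : E3) (a b α T : ℝ) : ℝ → E3 := spinPath m n u₀ (phase a b T) (turn α T)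

section RampPath

variable {m n u₀ : E3} {a b α T : ℝ}

lemma contDiff_rampPath : ContDiff ℝ 2 (rampPath m n u₀ a b α T) :=
  contDiff_spinPath (by unfold phase; fun_prop) (by unfold turn; fun_prop)

lemma rampPath_zero : rampPath m n u₀ a b α T 0 = u₀ := by
  simp [rampPath, spinPath, phase, turn]

lemma rampPath_self (hT : T ≠ 0) :
    rampPath m n u₀ a b α T T = axisRotation m α (axisRotation n (T * ((a + b) / 2)) u₀) := by
  simp only [rampPath, spinPath, phase, turn, div_self hT]
  congr 2 <;> field_simp <;> ring

lemma chirality_rampPath (hm : ‖m‖ = 1) (hn : ‖n‖ = 1) (hu₀ : ‖u₀‖ = 1) (hu₀n : ⟪u₀, n⟫ = 0) :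
    chirality (rampPath m n u₀ a b α T) = fun t =>
      (a + (b - a) * (t / T)) • axisRotation m (turn α T t) n
        + (α * (6 * (t / T) * (1 - t / T)) / T)
          • (m - ⟪rampPath m n u₀ a b α T t, m⟫ • rampPath m n u₀ a b α T t) :=
  chirality_spinPath hm hn hu₀ hu₀n (hasDerivAt_phase a b T) (hasDerivAt_turn α T)

lemma chirality_rampPath_zero (hm : ‖m‖ = 1) (hn : ‖n‖ = 1) (hu₀ : ‖u₀‖ = 1)
    (hu₀n : ⟪u₀, n⟫ = 0) : chirality (rampPath m n u₀ a b α T) 0 = a • n := by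
  simp [chirality_rampPath hm hn hu₀ hu₀n, turn]

lemma chirality_rampPath_self (hm : ‖m‖ = 1) (hn : ‖n‖ = 1) (hu₀ : ‖u₀‖ = 1)
    (hu₀n : ⟪u₀, n⟫ = 0) (hT : T ≠ 0) :
    chirality (rampPath m n u₀ a b α T) T = b • axisRotation m α n := by
  norm_num [chirality_rampPath hm hn hu₀ hu₀n, turn, div_self hT]

variable {η t : ℝ}

lemma norm_chirality_rampPath_sub_le (hm : ‖m‖ = 1) (hn : ‖n‖ = 1) (hu₀ : ‖u₀‖ = 1)
    (hu₀n : ⟪u₀, n⟫ = 0) (hmn : ⟪m, n⟫ = 0) (q : E3) (ha : |a - 1| ≤ η) (hb : |b - 1| ≤ η)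
    (hα : 0 ≤ α) (hαη : α ≤ 8 * η) (hT : 1 ≤ T) (ht : t ∈ Set.Icc 0 T) :
    ‖chirality (rampPath m n u₀ a b α T) t - q‖ ≤ ‖n - q‖ + 35 * η := by
  have hT0 : 0 < T := by linarith
  have := norm_chirality_spinPath_sub_le hm hn hu₀ hu₀n hmn (hasDerivAt_phase a b T)
    (hasDerivAt_turn α T) q t
  have hθ' := abs_phase_deriv_sub_one_le (a := a) (b := b) hT0 ht
  have hs := abs_turn_le hα hT0 ht
  have hs' := abs_turn_deriv_le hα hT ht
  have hba := abs_sub_le_of_abs_sub_one_le ha hb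
  rw [rampPath]
  linarith

lemma norm_deriv_chirality_rampPath_le (hm : ‖m‖ = 1) (hn : ‖n‖ = 1) (hu₀ : ‖u₀‖ = 1)
    (hu₀n : ⟪u₀, n⟫ = 0) (ha : |a - 1| ≤ η) (hb : |b - 1| ≤ η) (hη : η ≤ 1 / 32)
    (hα : 0 ≤ α) (hαη : α ≤ 8 * η) (hT : 1 ≤ T) (ht : t ∈ Set.Icc 0 T) :
    ‖deriv (chirality (rampPath m n u₀ a b α T)) t‖ ≤ 180 * η := by
  have hT0 : 0 < T := by linarith
  have := norm_deriv_chirality_spinPath_le hm hn hu₀ hu₀n (hasDerivAt_phase a b T)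
    (hasDerivAt_phase_deriv a b T) (hasDerivAt_turn α T) (hasDerivAt_turn_deriv α T) t
  have hba := abs_sub_le_of_abs_sub_one_le ha hb
  have hθ' : |a + (b - a) * (t / T)| ≤ 2 := by
    have := abs_phase_deriv_sub_one_le (a := a) (b := b) hT0 ht
    have := abs_sub_abs_le_abs_sub (a + (b - a) * (t / T)) 1
    rw [abs_one] at this
    linarith
  have hθ'' := (abs_phase_deriv2_le (a := a) (b := b) hT).trans hba
  have hs' := abs_turn_deriv_le hα hT ht
  have hs'' := abs_turn_deriv2_le hα hT ht
  rw [rampPath]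
  refine this.trans ?_
  nlinarith [abs_nonneg (a + (b - a) * (t / T)), abs_nonneg (α * (6 * (t / T) * (1 - t / T)) / T)]

end RampPath

lemma norm_inv_norm_smul_sub_le {E : Type*} [NormedAddCommGroup E] [NormedSpace ℝ E] {w q : E}
    (hq : ‖q‖ = 1) : ‖‖w‖⁻¹ • w - q‖ ≤ 2 * ‖w - q‖ := by
  by_cases hw : w = 0
  · simp [hw, hq]
  have hw' : 0 < ‖w‖ := norm_pos_iff.mpr hw
  have hnorm : ‖‖w‖⁻¹ • w - w‖ = |1 - ‖w‖| := by
    rw [show ‖w‖⁻¹ • w - w = ((1 - ‖w‖) / ‖w‖) • w by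
      rw [sub_div, div_self hw'.ne', one_div, sub_smul, one_smul], norm_smul,
      Real.norm_eq_abs, abs_div, abs_norm, div_mul_cancel₀ _ hw'.ne']
  calc ‖‖w‖⁻¹ • w - q‖ ≤ ‖‖w‖⁻¹ • w - w‖ + ‖w - q‖ := norm_sub_le_norm_sub_add_norm_sub _ _ _
    _ ≤ ‖w - q‖ + ‖w - q‖ := by
        rw [hnorm, ← hq, norm_sub_rev w]; gcongr; exact abs_norm_sub_norm_le q w
    _ = 2 * ‖w - q‖ := by ring

lemma exists_smul_unit_eq {q w u : E3} {η : ℝ} (hq : ‖q‖ = 1) (hη : η < 1) (hw : ‖w - q‖ ≤ η)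
    (h : ⟪u, w⟫ = 0) :
    ∃ a n, |a - 1| ≤ η ∧ ‖n‖ = 1 ∧ ‖n - q‖ ≤ 2 * η ∧ a • n = w ∧ ⟪u, n⟫ = 0 := by
  have ha : |‖w‖ - 1| ≤ η := by simpa [hq] using (abs_norm_sub_norm_le w q).trans hw
  have hw0 : w ≠ 0 := norm_pos_iff.mp (by linarith [abs_le.mp ha])
  refine ⟨‖w‖, ‖w‖⁻¹ • w, ha, norm_smul_inv_norm hw0, ?_, ?_, ?_⟩
  · exact (norm_inv_norm_smul_sub_le hq).trans (by linarith)
  · rw [smul_smul, mul_inv_cancel₀ (norm_ne_zero_iff.mpr hw0), one_smul]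
  · rw [real_inner_smul_right, h, mul_zero]

lemma real_inner_nonneg_of_norm_sub_le {E : Type*} [NormedAddCommGroup E] [InnerProductSpace ℝ E]
    {x y : E} (hx : ‖x‖ = 1) (hy : ‖y‖ = 1) (h : ‖x - y‖ ≤ 1) : 0 ≤ ⟪x, y⟫ := by
  have := norm_sub_sq_real x y
  rw [hx, hy] at this
  nlinarith [norm_nonneg (x - y)]

theorem exists_rampPath_connecting {q w₀ w₁ u₀ u₁ : E3} {η : ℝ} (hq : ‖q‖ = 1) (hη : η ≤ 1 / 32)
    (hw₀ : ‖w₀ - q‖ ≤ η) (hw₁ : ‖w₁ - q‖ ≤ η) (hu₀ : ‖u₀‖ = 1) (hu₁ : ‖u₁‖ = 1)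
    (h₀ : ⟪u₀, w₀⟫ = 0) (h₁ : ⟪u₁, w₁⟫ = 0) :
    ∃ T ∈ Set.Icc (1 : ℝ) 8, ∃ u : ℝ → E3, ContDiff ℝ 2 u ∧ (∀ t, ‖u t‖ = 1) ∧ u 0 = u₀ ∧
      u T = u₁ ∧ chirality u 0 = w₀ ∧ chirality u T = w₁ ∧ ∀ t ∈ Set.Icc 0 T,
        ‖chirality u t - q‖ ≤ 37 * η ∧ ‖deriv (chirality u) t‖ ≤ 180 * η := by
  obtain ⟨a, n₀, ha, hn₀, hn₀q, rfl, hu₀n₀⟩ := exists_smul_unit_eq hq (by linarith) hw₀ h₀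
  obtain ⟨b, n₁, hb, hn₁, hn₁q, rfl, hu₁n₁⟩ := exists_smul_unit_eq hq (by linarith) hw₁ h₁
  have hd : ‖n₀ - n₁‖ ≤ 4 * η := by
    have := norm_sub_le_norm_sub_add_norm_sub n₀ q n₁
    rw [norm_sub_rev q] at this
    linarith
  have hc := real_inner_nonneg_of_norm_sub_le hn₀ hn₁ (by linarith)
  obtain ⟨m, α, hm, hmn₀, hα, hαd, hrot⟩ := exists_axisRotation_eq hn₀ hn₁ hu₀ hu₀n₀ hc
  have hv : ‖axisRotation m (-α) u₁‖ = 1 := by rw [norm_axisRotation hm, hu₁]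
  have hvn₀ : ⟪axisRotation m (-α) u₁, n₀⟫ = 0 := by
    rw [← inner_axisRotation hm α, axisRotation_neg_angle hm, hrot, hu₁n₁]
  have hc0 : 31 / 32 ≤ (a + b) / 2 := by linarith [(abs_le.mp ha).1, (abs_le.mp hb).1]
  obtain ⟨β, ⟨hβ₁, hβ₂⟩, hβ⟩ :=
    exists_axisRotation_eq_of_orthogonal hn₀ hu₀ hv hu₀n₀ hvn₀ ((a + b) / 2)
  have hc0' : 0 < (a + b) / 2 := by linarith
  -- `phase a b T T = T * ((a + b) / 2)`, so this makes the final phase equal to `β`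
  set T := β / ((a + b) / 2)
  have hT1 : 1 ≤ T := (le_div_iff₀ hc0').mpr (by linarith)
  have hT8 : T ≤ 8 := (div_le_iff₀ hc0').mpr (by linarith [Real.pi_lt_d2])
  have hT0 : T ≠ 0 := by positivity
  refine ⟨T, ⟨hT1, hT8⟩, rampPath m n₀ u₀ a b α T, contDiff_rampPath, norm_spinPath hm hn₀ hu₀,
    rampPath_zero, ?_, chirality_rampPath_zero hm hn₀ hu₀ hu₀n₀, ?_, fun t ht => ⟨?_, ?_⟩⟩
  · rw [rampPath_self hT0, div_mul_cancel₀ β hc0'.ne', hβ, axisRotation_neg_angle hm]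
  · rw [chirality_rampPath_self hm hn₀ hu₀ hu₀n₀ hT0, hrot]
  · have := norm_chirality_rampPath_sub_le hm hn₀ hu₀ hu₀n₀ hmn₀ q ha hb hα (by linarith) hT1 ht
    linarith
  · exact norm_deriv_chirality_rampPath_le hm hn₀ hu₀ hu₀n₀ ha hb hη hα (by linarith) hT1 ht

lemma exists_pos_forall_dist_lt_of_isCompact {X : Type*} [PseudoMetricSpace X] {K U : Set X}
    {G : X → ℝ} {ε : ℝ} (hK : IsCompact K) (hU : IsOpen U) (hKU : K ⊆ U) (hG : ContinuousOn G U)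
    (hGK : ∀ x ∈ K, G x < ε) : ∃ δ > 0, ∀ p ∈ K, ∀ x, dist x p < δ → G x < ε := by
  obtain ⟨δ, hδ, hsub⟩ := hK.exists_thickening_subset_open (hG.isOpen_inter_preimage hU isOpen_Iio)
    fun x hx => ⟨hKU hx, hGK x hx⟩
  exact ⟨δ, hδ, fun p hp x hx => (hsub (Metric.mem_thickening_iff.mpr ⟨p, hp, hx⟩)).2⟩

lemma sq_norm_sq_sub_one_le {E : Type*} [SeminormedAddCommGroup E] {w q : E} {δ : ℝ}
    (hq : ‖q‖ = 1) (hw : ‖w - q‖ ≤ δ) (hδ : δ ≤ 1) : (‖w‖ ^ 2 - 1) ^ 2 ≤ 9 * δ ^ 2 := by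
  have h := (abs_norm_sub_norm_le w q).trans hw
  rw [hq] at h
  have h1 : (‖w‖ - 1) ^ 2 ≤ δ ^ 2 := by rw [← sq_abs]; gcongr
  have h2 : (‖w‖ + 1) ^ 2 ≤ 3 ^ 2 := by
    gcongr; linarith [abs_le.mp (h.trans hδ)]
  calc (‖w‖ ^ 2 - 1) ^ 2 = (‖w‖ - 1) ^ 2 * (‖w‖ + 1) ^ 2 := by ring
    _ ≤ δ ^ 2 * 3 ^ 2 := mul_le_mul h1 h2 (sq_nonneg _) (sq_nonneg _)
    _ = 9 * δ ^ 2 := by ring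

lemma energy_density_le {E : Type*} [SeminormedAddCommGroup E] {w w' q : E} {G : E → ℝ}
    {η ε : ℝ} (hq : ‖q‖ = 1) (hη : η ≤ 1 / 40) (hw : ‖w - q‖ ≤ 37 * η) (hG : G w < ε)
    (hw' : ‖w'‖ ≤ 180 * η) : (‖w‖ ^ 2 - 1) ^ 2 + G w / 2 + ‖w'‖ ^ 2 ≤ 2 ^ 16 * η ^ 2 + ε / 2 := by
  have hsq := sq_norm_sq_sub_one_le hq hw (by linarith)
  nlinarith [norm_nonneg w', norm_nonneg (w - q)]

lemma setLIntegral_Icc_ofReal_le {f : ℝ → ℝ} {T M : ℝ} (hT : 0 ≤ T)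
    (hf : ∀ t ∈ Set.Icc 0 T, f t ≤ M) :
    ∫⁻ t in Set.Icc 0 T, ENNReal.ofReal (f t) ≤ ENNReal.ofReal (M * T) := by
  calc ∫⁻ t in Set.Icc 0 T, ENNReal.ofReal (f t) ≤ ∫⁻ _ in Set.Icc 0 T, ENNReal.ofReal M :=
        setLIntegral_mono measurable_const fun t ht => ENNReal.ofReal_le_ofReal (hf t ht)
    _ = ENNReal.ofReal (M * T) := by
        rw [setLIntegral_const, Real.volume_Icc, sub_zero, ENNReal.ofReal_mul' hT]

end

theorem stmt9_general (k : ℕ) (q : Fin k → EuclideanSpace ℝ (Fin 3))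
    (hq : ∀ l, ‖q l‖ = 1)
    (G : EuclideanSpace ℝ (Fin 3) → ℝ)
    (hGcont : ContinuousOn G {x : EuclideanSpace ℝ (Fin 3) | x ≠ 0})
    (hGzero : ∀ x : EuclideanSpace ℝ (Fin 3),
      G x = 0 ↔ x ∈ ⋃ l, (Submodule.span ℝ {q l} : Set (EuclideanSpace ℝ (Fin 3))))
    (ε : ℝ) (hε : 0 < ε) :
    ∃ η : ℝ, 0 < η ∧
      ∀ qhat ∈ ⋃ l, ({q l, -q l} : Set (EuclideanSpace ℝ (Fin 3))),
      ∀ w₀ w₁ : EuclideanSpace ℝ (Fin 3), ‖w₀ - qhat‖ ≤ η → ‖w₁ - qhat‖ ≤ η →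
      ∀ u₀ u₁ : EuclideanSpace ℝ (Fin 3), ‖u₀‖ = 1 → ‖u₁‖ = 1 →
        ⟪u₀, w₀⟫ = 0 → ⟪u₁, w₁⟫ = 0 →
      ∃ tstar ∈ Set.Ioc (0 : ℝ) (3 + 4 * Real.pi),
      ∃ u : ℝ → EuclideanSpace ℝ (Fin 3), ContDiff ℝ 2 u ∧
        (∀ t ∈ Set.Icc (0 : ℝ) tstar, ‖u t‖ = 1) ∧
        u 0 = u₀ ∧ u tstar = u₁ ∧
        cross3 (u 0) (deriv u 0) = w₀ ∧ cross3 (u tstar) (deriv u tstar) = w₁ ∧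
        (∫⁻ t in Set.Icc (0 : ℝ) tstar,
            ENNReal.ofReal ((‖cross3 (u t) (deriv u t)‖ ^ 2 - 1) ^ 2
              + G (cross3 (u t) (deriv u t)) / 2
              + ‖deriv (fun s => cross3 (u s) (deriv u s)) t‖ ^ 2)
          ≤ ENNReal.ofReal ε) := by
  have hQ : ∀ p ∈ ⋃ l, ({q l, -q l} : Set E3), ‖p‖ = 1 ∧ G p = 0 := by
    simp only [Set.mem_iUnion, Set.mem_insert_iff, Set.mem_singleton_iff]
    rintro p ⟨l, rfl | rfl⟩ <;> refine ⟨by simp [hq], (hGzero _).mpr (Set.mem_iUnion.mpr ⟨l, ?_⟩)⟩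
    · exact Submodule.mem_span_singleton_self _
    · exact neg_mem (Submodule.mem_span_singleton_self _)
  obtain ⟨δ, hδ, hGδ⟩ := exists_pos_forall_dist_lt_of_isCompact (ε := ε / 16)
    (Set.finite_iUnion fun l => Set.toFinite {q l, -q l}).isCompact isOpen_ne
    (fun p hp => norm_ne_zero_iff.mp (by simp [(hQ p hp).1])) hGcont
    fun p hp => by rw [(hQ p hp).2]; positivity
  set η := min (1 / 40) (min (δ / 38) (√ε / 2 ^ 10))
  have hη40 : η ≤ 1 / 40 := min_le_left _ _
  have hηδ : η ≤ δ / 38 := (min_le_right _ _).trans (min_le_left _ _)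
  have hηε : η ^ 2 ≤ ε / 2 ^ 20 := by
    calc η ^ 2 ≤ (√ε / 2 ^ 10) ^ 2 := by gcongr; exact (min_le_right _ _).trans (min_le_right _ _)
      _ = ε / 2 ^ 20 := by rw [div_pow, Real.sq_sqrt hε.le]; norm_num
  refine ⟨η, by positivity, fun qhat hqhat w₀ w₁ hw₀ hw₁ u₀ u₁ hu₀ hu₁ h₀ h₁ => ?_⟩
  obtain ⟨T, ⟨hT1, hT8⟩, u, hu, hnorm, hu0, huT, hw0, hwT, hbound⟩ :=
    exists_rampPath_connecting (hQ qhat hqhat).1 (by linarith) hw₀ hw₁ hu₀ hu₁ h₀ h₁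
  refine ⟨T, ⟨by linarith, by linarith [Real.pi_gt_three]⟩, u, hu, fun t _ => hnorm t, hu0, huT,
    hw0, hwT, (setLIntegral_Icc_ofReal_le (M := 2 ^ 16 * η ^ 2 + ε / 16 / 2) (by linarith)
      fun t ht => ?_).trans (ENNReal.ofReal_le_ofReal (by nlinarith))⟩
  obtain ⟨hw, hw'⟩ := hbound t ht
  have hG := hGδ qhat hqhat (chirality u t) (by rw [dist_eq_norm]; linarith)
  exact energy_density_le (hQ qhat hqhat).1 hη40 hw hG hw'

/-- (connection lemma) for every `ε > 0` there is `η > 0` such that any two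
spin/chirality data `(u₀,w₀)`, `(u₁,w₁)` with `w₀, w₁` within `η` of a common point
`q̂ ∈ Q_k` can be joined, within time `t* ≤ 3 + 4π`, by a `C²` spin path on `S²` of
penalized energy at most `ε`. -/
theorem stmt9 (k : ℕ) (hk : 1 ≤ k) (q : Fin k → EuclideanSpace ℝ (Fin 3))
    (hq : ∀ l, ‖q l‖ = 1) (hqinj : Function.Injective q)
    (G : EuclideanSpace ℝ (Fin 3) → ℝ)
    (hGnn : ∀ x, 0 ≤ G x) (hG0 : G 0 = 0)
    (hGcont : ContinuousOn G {x : EuclideanSpace ℝ (Fin 3) | x ≠ 0})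
    (hGhom : ∀ c : ℝ, 0 < c → ∀ x : EuclideanSpace ℝ (Fin 3), x ≠ 0 → G (c • x) = G x)
    (hGzero : ∀ x : EuclideanSpace ℝ (Fin 3),
      G x = 0 ↔ x ∈ ⋃ l, (Submodule.span ℝ {q l} : Set (EuclideanSpace ℝ (Fin 3))))
    (ε : ℝ) (hε : 0 < ε) :
    ∃ η : ℝ, 0 < η ∧
      ∀ qhat ∈ ⋃ l, ({q l, -q l} : Set (EuclideanSpace ℝ (Fin 3))),
      ∀ w₀ w₁ : EuclideanSpace ℝ (Fin 3), ‖w₀ - qhat‖ ≤ η → ‖w₁ - qhat‖ ≤ η →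
      ∀ u₀ u₁ : EuclideanSpace ℝ (Fin 3), ‖u₀‖ = 1 → ‖u₁‖ = 1 →
        ⟪u₀, w₀⟫ = 0 → ⟪u₁, w₁⟫ = 0 →
      ∃ tstar ∈ Set.Ioc (0 : ℝ) (3 + 4 * Real.pi),
      ∃ u : ℝ → EuclideanSpace ℝ (Fin 3), ContDiff ℝ 2 u ∧
        (∀ t ∈ Set.Icc (0 : ℝ) tstar, ‖u t‖ = 1) ∧
        u 0 = u₀ ∧ u tstar = u₁ ∧
        cross3 (u 0) (deriv u 0) = w₀ ∧ cross3 (u tstar) (deriv u tstar) = w₁ ∧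
        (∫⁻ t in Set.Icc (0 : ℝ) tstar,
            ENNReal.ofReal ((‖cross3 (u t) (deriv u t)‖ ^ 2 - 1) ^ 2
              + G (cross3 (u t) (deriv u t)) / 2
              + ‖deriv (fun s => cross3 (u s) (deriv u s)) t‖ ^ 2)
          ≤ ENNReal.ofReal ε) :=
  stmt9_general k q hq G hGcont hGzero ε hε
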